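/- arXiv:1410.0991 — 2 statements merged into one kernel-verified Lean document; each statement's English description precedes it below -/
import Mathlib

section
/- Pathwise uniqueness holds for the non-Gaussian Ornstein–Uhlenbeck integral equation: if Z : [0,T] → ℝ is Borel measurable, Lebesgue-integrable on [0,T], and satisfies Z(t) = y − λ∫₀ᵗ Z(s) ds + (ℓ(t) − ℓ(0)) for every t ∈ [0,T], then Z(t) = Y(t) for every t ∈ [0,T], where Y(t) = y e^{−λt} + ∫_{(0,t]} e^{−λ(t−s)} dμ_ℓ(s). -/
/-!
Both `Z` and the Ornstein–Uhlenbeck path `Y` solve the linear Volterra equation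
`X t = y - λ ∫_{(0,t]} X + μ_ℓ((0,t])`. For `Y` this is Fubini's theorem applied to the kernel
`1_{u ≤ s} e^{-λ(s-u)}` on `(0,t]²`, combined with `λ ∫_u^t e^{-λ(s-u)} ds = 1 - e^{-λ(t-u)}`.
The difference `D = Z - Y` then satisfies `D t = -λ ∫_0^t D`, so its primitive solves the linear
ODE `F' = -λ F` with `F 0 = 0`; by uniqueness for ODEs `F = 0`, hence `D = 0`.
-/

open MeasureTheory Set Real

theorem mul_integral_exp_neg_mul_sub (c u t : ℝ) :
    c * ∫ s in u..t, exp (-c * (s - u)) = 1 - exp (-c * (t - u)) := by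
  have hderiv (s : ℝ) :
      HasDerivAt (fun s => -exp (-c * (s - u))) (c * exp (-c * (s - u))) s :=
    (((hasDerivAt_id' s).sub_const u).const_mul (-c)).exp.fun_neg.congr_deriv (by ring)
  rw [← intervalIntegral.integral_const_mul,
    intervalIntegral.integral_eq_sub_of_hasDerivAt (fun s _ => hderiv s)
      (by apply Continuous.intervalIntegrable; fun_prop),
    sub_self, mul_zero, exp_zero]
  ring

theorem eqOn_zero_of_eq_mul_intervalIntegral {D : ℝ → ℝ} {a b c : ℝ}
    (hD : IntegrableOn D (Icc a b)) (h : ∀ t ∈ Icc a b, D t = c * ∫ s in a..t, D s) :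
    EqOn D 0 (Icc a b) := by
  have integral_indicator_eq {f : ℝ → ℝ} {t : ℝ} (ht : t ∈ Icc a b) :
      ∫ s in a..t, (Icc a b).indicator f s = ∫ s in a..t, f s :=
    intervalIntegral.integral_congr fun s hs =>
      indicator_of_mem (uIcc_subset_Icc ⟨le_rfl, ht.1.trans ht.2⟩ ht hs) f
  set F : ℝ → ℝ := fun t => ∫ s in a..t, (Icc a b).indicator D s
  have hF : Continuous F :=
    ((integrable_indicator_iff measurableSet_Icc).2 hD).continuous_primitive a
  have hDF : ∀ t ∈ Icc a b, D t = c * F t := fun t ht => by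
    rw [h t ht, ← integral_indicator_eq ht]
  set G : ℝ → ℝ := fun t => ∫ s in a..t, c * F s
  have hFG : ∀ t ∈ Icc a b, F t = G t := fun t ht => by
    simp only [F, G, integral_indicator_eq ht]
    exact intervalIntegral.integral_congr fun s hs =>
      hDF s (uIcc_subset_Icc ⟨le_rfl, ht.1.trans ht.2⟩ ht hs)
  have hG : ∀ t, HasDerivAt G (c * F t) t := fun t =>
    ((continuous_const.mul hF).integral_hasStrictDerivAt a t).hasDerivAt
  -- `G` is differentiable everywhere and agrees with `F` on `[a, b]`, where it therefore solves
  -- the linear ODE `G' = c G` with `G a = 0`.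
  have hG0 : EqOn G 0 (Icc a b) :=
    ODE_solution_unique_of_mem_Icc_right (v := fun _ x => c • x) (s := fun _ => univ)
      (fun _ _ => (lipschitzWith_smul c).lipschitzOnWith)
      (fun t _ => (hG t).continuousAt.continuousWithinAt)
      (fun t ht => by simpa [hFG t (Ico_subset_Icc_self ht)] using (hG t).hasDerivWithinAt)
      (fun _ _ => mem_univ _) continuousOn_const
      (fun t _ => by rw [Pi.zero_apply, smul_zero]; exact hasDerivWithinAt_const t (Ici t) 0)
      (fun _ _ => mem_univ _) (by simp [G])
  intro t ht
  rw [hDF t ht, hFG t ht, hG0 ht, Pi.zero_apply, mul_zero]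

theorem StieltjesFunction.measure_real_Ioc_of_le (f : StieltjesFunction ℝ) {a b : ℝ}
    (hab : a ≤ b) : f.measure.real (Ioc a b) = f b - f a := by
  rw [Measure.real, f.measure_Ioc, ENNReal.toReal_ofReal (sub_nonneg.2 (f.mono hab))]

noncomputable def expKernel (c s u : ℝ) : ℝ := if u ≤ s then exp (-c * (s - u)) else 0

section ExpKernel

variable (ν : Measure ℝ) [IsLocallyFiniteMeasure ν] (c : ℝ) {a t : ℝ}

theorem integrable_uncurry_expKernel :
    Integrable (Function.uncurry (expKernel c))
      ((volume.restrict (Ioc a t)).prod (ν.restrict (Ioc a t))) := by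
  have hkernel : Function.uncurry (expKernel c)
      = {p : ℝ × ℝ | p.2 ≤ p.1}.indicator fun p => exp (-c * (p.1 - p.2)) := by
    ext ⟨s, u⟩
    simp only [Function.uncurry_apply_pair, expKernel, indicator_apply, mem_ofPred_eq]
  rw [Measure.prod_restrict, hkernel]
  refine IntegrableOn.indicator ?_ (measurableSet_le measurable_snd measurable_fst)
  exact ((by fun_prop : Continuous fun p : ℝ × ℝ => exp (-c * (p.1 - p.2))).continuousOn
    |>.integrableOn_compact (isCompact_Icc.prod isCompact_Icc)).mono_set
    (prod_mono Ioc_subset_Icc_self Ioc_subset_Icc_self)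

omit [IsLocallyFiniteMeasure ν] in
theorem setIntegral_expKernel_left {s : ℝ} (hs : s ≤ t) :
    ∫ u in Ioc a t, expKernel c s u ∂ν = ∫ u in Ioc a s, exp (-c * (s - u)) ∂ν := by
  have hkernel : expKernel c s = (Iic s).indicator fun u => exp (-c * (s - u)) := by
    ext u; simp [expKernel, indicator_apply]
  rw [hkernel, integral_indicator measurableSet_Iic, Measure.restrict_restrict measurableSet_Iic,
    inter_comm, Ioc_inter_Iic, min_eq_right hs]

theorem mul_setIntegral_expKernel_right {u : ℝ} (hu : u ∈ Ioc a t) :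
    c * ∫ s in Ioc a t, expKernel c s u = 1 - exp (-c * (t - u)) := by
  have hkernel : (expKernel c · u) = (Ici u).indicator fun s => exp (-c * (s - u)) := by
    ext s; simp [expKernel, indicator_apply]
  have hIcc : Ici u ∩ Ioc a t = Icc u t := by
    ext s
    simp only [mem_inter_iff, mem_Ici, mem_Ioc, mem_Icc]
    grind
  rw [hkernel, integral_indicator measurableSet_Ici, Measure.restrict_restrict measurableSet_Ici,
    hIcc, integral_Icc_eq_integral_Ioc, ← intervalIntegral.integral_of_le hu.2,
    mul_integral_exp_neg_mul_sub]

theorem integrableOn_setIntegral_exp_neg_mul_sub :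
    IntegrableOn (fun s => ∫ u in Ioc a s, exp (-c * (s - u)) ∂ν) (Ioc a t) :=
  IntegrableOn.congr_fun (integrable_uncurry_expKernel ν c).integral_prod_left
    (fun _ hs => setIntegral_expKernel_left ν c hs.2) measurableSet_Ioc

theorem mul_setIntegral_setIntegral_exp_neg_mul_sub :
    c * ∫ s in Ioc a t, ∫ u in Ioc a s, exp (-c * (s - u)) ∂ν
      = ν.real (Ioc a t) - ∫ u in Ioc a t, exp (-c * (t - u)) ∂ν := calc
  _ = c * ∫ s in Ioc a t, ∫ u in Ioc a t, expKernel c s u ∂ν := by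
    rw [setIntegral_congr_fun measurableSet_Ioc fun s hs => setIntegral_expKernel_left ν c hs.2]
  _ = ∫ u in Ioc a t, c * (∫ s in Ioc a t, expKernel c s u) ∂ν := by
    rw [integral_integral_swap (integrable_uncurry_expKernel ν c), integral_const_mul]
  _ = ∫ u in Ioc a t, (1 - exp (-c * (t - u))) ∂ν :=
    setIntegral_congr_fun measurableSet_Ioc fun u hu => mul_setIntegral_expKernel_right c hu
  _ = _ := by
    rw [integral_sub (integrableOn_const (C := (1 : ℝ)) measure_Ioc_lt_top.ne)
        (by fun_prop : Continuous _).integrableOn_Ioc,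
      setIntegral_const, smul_eq_mul, mul_one]

end ExpKernel

noncomputable def ouPath (ν : Measure ℝ) (c y t : ℝ) : ℝ :=
  y * exp (-c * t) + ∫ u in Ioc 0 t, exp (-c * (t - u)) ∂ν

section OUPath

variable (ν : Measure ℝ) [IsLocallyFiniteMeasure ν] (c y : ℝ) {t : ℝ}

theorem integrableOn_ouPath : IntegrableOn (ouPath ν c y) (Ioc 0 t) :=
  (Continuous.integrableOn_Ioc (by fun_prop)).add (integrableOn_setIntegral_exp_neg_mul_sub ν c)

theorem ouPath_eq (ht : 0 ≤ t) :
    ouPath ν c y t = y - c * (∫ s in Ioc 0 t, ouPath ν c y s) + ν.real (Ioc 0 t) := by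
  have hexp : c * ∫ s in Ioc 0 t, y * exp (-c * s) = y * (1 - exp (-c * t)) := by
    simpa [integral_const_mul, ← intervalIntegral.integral_of_le ht, mul_left_comm]
      using congrArg (y * ·) (mul_integral_exp_neg_mul_sub c 0 t)
  simp only [ouPath]
  rw [integral_add (Continuous.integrableOn_Ioc (by fun_prop))
      (integrableOn_setIntegral_exp_neg_mul_sub ν c), mul_add, hexp,
    mul_setIntegral_setIntegral_exp_neg_mul_sub]
  ring

end OUPath

theorem stmt_1_general (lam T y : ℝ)
    (ℓ : StieltjesFunction ℝ)
    (Y Z : ℝ → ℝ)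
    (hY : ∀ t, Y t = y * Real.exp (-lam * t)
      + ∫ s in Ioc (0:ℝ) t, Real.exp (-lam * (t - s)) ∂ℓ.measure)
    (hZint : IntegrableOn Z (Icc (0:ℝ) T))
    (hZ : ∀ t ∈ Icc (0:ℝ) T,
      Z t = y - lam * (∫ s in Ioc (0:ℝ) t, Z s) + (ℓ t - ℓ 0)) :
    ∀ t ∈ Icc (0:ℝ) T, Z t = Y t := by
  obtain rfl : Y = ouPath ℓ.measure lam y := funext hY
  have hD := eqOn_zero_of_eq_mul_intervalIntegral (c := -lam)
    (D := fun s => Z s - ouPath ℓ.measure lam y s)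
    (hZint.sub ((integrableOn_Icc_iff_integrableOn_Ioc).2 (integrableOn_ouPath _ _ _)))
    fun t ht => by
      have hsub : Ioc 0 t ⊆ Icc 0 T := Ioc_subset_Icc_self.trans (Icc_subset_Icc_right ht.2)
      rw [intervalIntegral.integral_of_le ht.1,
        integral_sub (hZint.mono_set hsub) (integrableOn_ouPath _ _ _)]
      linear_combination hZ t ht - ouPath_eq ℓ.measure lam y ht.1
        - ℓ.measure_real_Ioc_of_le ht.1
  exact fun t ht => sub_eq_zero.1 (hD ht)

/-- Pathwise uniqueness for the non-Gaussian OU integral equation: any Borel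
measurable, Lebesgue-integrable `Z` on `[0,T]` satisfying
`Z t = y - λ ∫₀ᵗ Z(s) ds + (ℓ t - ℓ 0)` on `[0,T]` coincides on `[0,T]` with
`Y t = y e^{-λ t} + ∫_{(0,t]} e^{-λ(t-s)} dμ_ℓ(s)`. -/
theorem stmt_1 (lam T y : ℝ) (hlam : 0 < lam) (hT : 0 < T) (hy : 0 ≤ y)
    (ℓ : StieltjesFunction ℝ)
    (Y Z : ℝ → ℝ)
    (hY : ∀ t, Y t = y * Real.exp (-lam * t)
      + ∫ s in Ioc (0:ℝ) t, Real.exp (-lam * (t - s)) ∂ℓ.measure)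
    (hZmeas : Measurable Z)
    (hZint : IntegrableOn Z (Icc (0:ℝ) T))
    (hZ : ∀ t ∈ Icc (0:ℝ) T,
      Z t = y - lam * (∫ s in Ioc (0:ℝ) t, Z s) + (ℓ t - ℓ 0)) :
    ∀ t ∈ Icc (0:ℝ) T, Z t = Y t :=
  stmt_1_general lam T y ℓ Y Z hY hZint hZ
end

section
/- Cubic growth of the partial derivatives of ρ: under conditions C1 and C2 the function ρ is differentiable on the interior of S and there exist nonnegative constants Ā₁, Ā₂, Ā₃, Ā₄, depending only on d, r, K and the constants in C1 and C2, such that for every i ∈ {1,…,h} and every y in the interior of S, |∂ρ(y)/∂y_i| ≤ Ā₁ + Ā₂‖y‖ + Ā₃‖y‖² + Ā₄‖y‖³. -/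
open Matrix

/-!
Write `B = b - r` and `M = (σσᵀ)⁻¹`. The product rule gives
`∂ᵢρ = ∂ᵢB ⬝ᵥ M B + B ⬝ᵥ (∂ᵢM) B + B ⬝ᵥ M ∂ᵢB`. On `S` the entries of `B`, `∂ᵢB` and `∂ᵢM`
grow at most affinely in `‖y‖`, and those of `M` are bounded by the constant `1 / (bσ K)`
since `‖y‖ ≥ K`. Each of the three terms is therefore at most `d²` times a product of three
such bounds, a cubic in `‖y‖` with nonnegative coefficients.
-/

section QuadraticForm

variable {E ι : Type*} [NormedAddCommGroup E] [NormedSpace ℝ E] [Fintype ι]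

theorem abs_dotProduct_mulVec_le {x w : ι → ℝ} {A : Matrix ι ι ℝ} {α μ ω : ℝ}
    (hx : ∀ i, |x i| ≤ α) (hA : ∀ i j, |A i j| ≤ μ) (hw : ∀ j, |w j| ≤ ω) :
    |x ⬝ᵥ (A *ᵥ w)| ≤ Fintype.card ι ^ 2 * (α * μ * ω) := by
  have hterm : ∀ i j, |x i * (A i j * w j)| ≤ α * μ * ω := fun i j => by
    rw [abs_mul, abs_mul, ← mul_assoc]
    have hα : 0 ≤ α := (abs_nonneg _).trans (hx i)
    have hμ : 0 ≤ μ := (abs_nonneg _).trans (hA i j)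
    gcongr
    exacts [hx i, hA i j, hw j]
  calc |x ⬝ᵥ (A *ᵥ w)| = |∑ i, ∑ j, x i * (A i j * w j)| := by
        simp only [dotProduct, mulVec, Finset.mul_sum]
    _ ≤ ∑ i, ∑ j, |x i * (A i j * w j)| :=
        (Finset.abs_sum_le_sum_abs _ _).trans
          (Finset.sum_le_sum fun i _ => Finset.abs_sum_le_sum_abs _ _)
    _ ≤ ∑ _i : ι, ∑ _j : ι, α * μ * ω :=
        Finset.sum_le_sum fun i _ => Finset.sum_le_sum fun j _ => hterm i j
    _ = Fintype.card ι ^ 2 * (α * μ * ω) := by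
        simp only [Finset.sum_const, Finset.card_univ, nsmul_eq_mul]
        ring

variable {u : E → ι → ℝ} {M : E → Matrix ι ι ℝ} {y : E}

theorem hasFDerivAt_dotProduct_mulVec {u' : E →L[ℝ] ι → ℝ} {M' : ι → ι → E →L[ℝ] ℝ}
    (hu : HasFDerivAt u u' y) (hM : ∀ m n, HasFDerivAt (fun z => M z m n) (M' m n) y) :
    HasFDerivAt (fun z => u z ⬝ᵥ (M z *ᵥ u z))
      (∑ m, ∑ n, ((M y m n * u y n) • (ContinuousLinearMap.proj m).comp u'
        + (u y m * u y n) • M' m n + (u y m * M y m n) • (ContinuousLinearMap.proj n).comp u')) y := by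
  have hcoord : ∀ m, HasFDerivAt (fun z => u z m) ((ContinuousLinearMap.proj m).comp u') y :=
    fun m => (ContinuousLinearMap.proj (R := ℝ) (φ := fun _ : ι => ℝ) m).hasFDerivAt.comp y hu
  have hsum := HasFDerivAt.fun_sum (u := Finset.univ) fun m _ =>
    HasFDerivAt.fun_sum (u := Finset.univ) fun n _ => (hcoord m).mul ((hM m n).mul (hcoord n))
  have hquad : (fun z => u z ⬝ᵥ (M z *ᵥ u z)) = fun z => ∑ m, ∑ n, u z m * (M z m n * u z n) := by
    funext z
    simp only [dotProduct, mulVec, Finset.mul_sum]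
  rw [hquad]
  refine hsum.congr_fderiv (Finset.sum_congr rfl fun m _ => Finset.sum_congr rfl fun n _ => ?_)
  ext v
  simp only [_root_.add_apply, _root_.smul_apply, smul_eq_mul, Pi.mul_apply]
  ring

theorem fderiv_dotProduct_mulVec_apply (hu : DifferentiableAt ℝ u y)
    (hM : ∀ m n, DifferentiableAt ℝ (fun z => M z m n) y) (v : E) :
    fderiv ℝ (fun z => u z ⬝ᵥ (M z *ᵥ u z)) y v
      = fderiv ℝ u y v ⬝ᵥ (M y *ᵥ u y)
        + u y ⬝ᵥ (Matrix.of (fun m n => fderiv ℝ (fun z => M z m n) y v) *ᵥ u y)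
        + u y ⬝ᵥ (M y *ᵥ fderiv ℝ u y v) := by
  rw [(hasFDerivAt_dotProduct_mulVec hu.hasFDerivAt fun m n => (hM m n).hasFDerivAt).fderiv]
  simp only [_root_.sum_apply, _root_.add_apply, _root_.smul_apply, ContinuousLinearMap.comp_apply,
    ContinuousLinearMap.proj_apply, smul_eq_mul, dotProduct, mulVec, Matrix.of_apply,
    Finset.sum_add_distrib, Finset.mul_sum]
  refine congrArg₂ (· + ·) (congrArg₂ (· + ·) ?_ ?_) ?_ <;>
    exact Finset.sum_congr rfl fun _ _ => Finset.sum_congr rfl fun _ _ => by ring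

end QuadraticForm

theorem exists_cubic_eq_of_affine {N a b a' b' c p q : ℝ} (hN : 0 ≤ N) (ha : 0 ≤ a) (hb : 0 ≤ b)
    (ha' : 0 ≤ a') (hb' : 0 ≤ b') (hc : 0 ≤ c) (hp : 0 ≤ p) (hq : 0 ≤ q) :
    ∃ A₁ A₂ A₃ A₄ : ℝ, 0 ≤ A₁ ∧ 0 ≤ A₂ ∧ 0 ≤ A₃ ∧ 0 ≤ A₄ ∧ ∀ t : ℝ,
      N * ((a' + b' * t) * c * (a + b * t)) + N * ((a + b * t) * (p + q * t) * (a + b * t))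
        + N * ((a + b * t) * c * (a' + b' * t))
        = A₁ + A₂ * t + A₃ * t ^ 2 + A₄ * t ^ 3 :=
  ⟨N * (2 * c * a * a' + a ^ 2 * p), N * (2 * c * (a * b' + b * a') + a ^ 2 * q + 2 * a * b * p),
    N * (2 * c * b * b' + 2 * a * b * q + b ^ 2 * p), N * (b ^ 2 * q),
    by positivity, by positivity, by positivity, by positivity, fun t => by ring⟩

theorem stmt_11_general (d h : ℕ)
    (Sset : Set (Fin h → ℝ)) (K : ℝ) (hK : 0 < K)
    (hSK : ∀ y ∈ Sset, K ≤ ‖y‖)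
    (r : ℝ)
    (b : (Fin h → ℝ) → Fin d → ℝ)
    (σ : (Fin h → ℝ) → Matrix (Fin d) (Fin d) ℝ)
    (Ab Bb bσ : ℝ)
    (hAb : 0 ≤ Ab) (hBb : 0 ≤ Bb) (hbσ : 0 < bσ)
    (hb : ∀ y ∈ Sset, ∀ i, |b y i| ≤ Ab + Bb * ‖y‖)
    (hσinv : ∀ y ∈ Sset, ∀ m n, |((σ y * (σ y)ᵀ)⁻¹) m n| ≤ 1 / (bσ * ‖y‖))
    -- Condition C2:
    (Abb Bbb Abσ Bbσ : ℝ)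
    (hAbb : 0 ≤ Abb) (hBbb : 0 ≤ Bbb) (hAbσ : 0 ≤ Abσ) (hBbσ : 0 ≤ Bbσ)
    (hbdiff : ∀ y ∈ interior Sset, DifferentiableAt ℝ b y)
    (hbderiv : ∀ y ∈ interior Sset, ∀ i : Fin h,
      ‖fderiv ℝ b y (Pi.single i 1)‖ ≤ Abb + Bbb * ‖y‖)
    (hMdiff : ∀ y ∈ interior Sset, ∀ m n : Fin d,
      DifferentiableAt ℝ (fun z => ((σ z * (σ z)ᵀ)⁻¹) m n) y)
    (hMderiv : ∀ y ∈ interior Sset, ∀ i : Fin h, ∀ m n : Fin d,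
      |fderiv ℝ (fun z => ((σ z * (σ z)ᵀ)⁻¹) m n) y (Pi.single i 1)|
        ≤ Abσ + Bbσ * ‖y‖) :
    ∃ A₁ A₂ A₃ A₄ : ℝ, 0 ≤ A₁ ∧ 0 ≤ A₂ ∧ 0 ≤ A₃ ∧ 0 ≤ A₄ ∧
      ∀ y ∈ interior Sset,
        DifferentiableAt ℝ
          (fun z => (fun i => b z i - r) ⬝ᵥ
            ((σ z * (σ z)ᵀ)⁻¹ *ᵥ (fun i => b z i - r))) y
        ∧ ∀ i : Fin h,
            |fderiv ℝ
              (fun z => (fun i => b z i - r) ⬝ᵥ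
                ((σ z * (σ z)ᵀ)⁻¹ *ᵥ (fun i => b z i - r))) y (Pi.single i 1)|
              ≤ A₁ + A₂ * ‖y‖ + A₃ * ‖y‖ ^ 2 + A₄ * ‖y‖ ^ 3 := by
  obtain ⟨A₁, A₂, A₃, A₄, h₁, h₂, h₃, h₄, hcubic⟩ := exists_cubic_eq_of_affine
    (N := (d : ℝ) ^ 2) (a := Ab + |r|) (c := 1 / (bσ * K)) (by positivity) (by positivity) hBb
    hAbb hBbb (by positivity) hAbσ hBbσ
  refine ⟨A₁, A₂, A₃, A₄, h₁, h₂, h₃, h₄, fun y hy => ?_⟩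
  have hyS : y ∈ Sset := interior_subset hy
  have hB : HasFDerivAt (fun z i => b z i - r) (fderiv ℝ b y) y :=
    (hbdiff y hy).hasFDerivAt.sub_const fun _ => r
  refine ⟨(hasFDerivAt_dotProduct_mulVec hB fun m n => (hMdiff y hy m n).hasFDerivAt).differentiableAt,
    fun i => ?_⟩
  rw [fderiv_dotProduct_mulVec_apply hB.differentiableAt (hMdiff y hy), hB.fderiv]
  have hBy : ∀ m, |b y m - r| ≤ Ab + |r| + Bb * ‖y‖ := fun m => by
    linarith [abs_sub (b y m) r, hb y hyS m]
  have hMy : ∀ m n, |((σ y * (σ y)ᵀ)⁻¹) m n| ≤ 1 / (bσ * K) := fun m n =>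
    (hσinv y hyS m n).trans <| one_div_le_one_div_of_le (mul_pos hbσ hK)
      (mul_le_mul_of_nonneg_left (hSK y hyS) hbσ.le)
  have hB'y : ∀ m, |fderiv ℝ b y (Pi.single i 1) m| ≤ Abb + Bbb * ‖y‖ := fun m =>
    (norm_le_pi_norm _ m).trans (hbderiv y hy i)
  calc _ ≤ _ := abs_add_three _ _ _
    _ ≤ _ := add_le_add_three (abs_dotProduct_mulVec_le hB'y hMy hBy)
        (abs_dotProduct_mulVec_le hBy (hMderiv y hy i) hBy) (abs_dotProduct_mulVec_le hBy hMy hB'y)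
    _ = _ := by rw [Fintype.card_fin, hcubic]

/-- Cubic growth of the partial derivatives of `ρ`: under conditions C1 and C2
the function `ρ(y) = B(y)ᵀ(σ(y)σ(y)ᵀ)⁻¹B(y)` is differentiable on the interior
of `S` and its partial derivatives satisfy
`|∂ρ/∂yᵢ| ≤ Ā₁ + Ā₂‖y‖ + Ā₃‖y‖² + Ā₄‖y‖³` for nonnegative constants `Āⱼ`. -/
theorem stmt_11 (d h : ℕ) (hd : 0 < d) (hh : 0 < h)
    (Sset : Set (Fin h → ℝ)) (K : ℝ) (hK : 0 < K)
    (hSK : ∀ y ∈ Sset, K ≤ ‖y‖)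
    (r : ℝ) (hr : 0 ≤ r)
    (b : (Fin h → ℝ) → Fin d → ℝ)
    (σ : (Fin h → ℝ) → Matrix (Fin d) (Fin d) ℝ)
    (Ab Bb Aσ Bσ bσ : ℝ)
    (hAb : 0 ≤ Ab) (hBb : 0 ≤ Bb) (hAσ : 0 ≤ Aσ) (hBσ : 0 ≤ Bσ) (hbσ : 0 < bσ)
    (hinv : ∀ y ∈ Sset, IsUnit (σ y * (σ y)ᵀ))
    (hb : ∀ y ∈ Sset, ∀ i, |b y i| ≤ Ab + Bb * ‖y‖)
    (hσ : ∀ y ∈ Sset, ∀ m n, |(σ y * (σ y)ᵀ) m n| ≤ Aσ + Bσ * ‖y‖)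
    (hσinv : ∀ y ∈ Sset, ∀ m n, |((σ y * (σ y)ᵀ)⁻¹) m n| ≤ 1 / (bσ * ‖y‖))
    -- Condition C2:
    (hne : (interior Sset).Nonempty)
    (Abb Bbb Abσ Bbσ : ℝ)
    (hAbb : 0 ≤ Abb) (hBbb : 0 ≤ Bbb) (hAbσ : 0 ≤ Abσ) (hBbσ : 0 ≤ Bbσ)
    (hbdiff : ∀ y ∈ interior Sset, DifferentiableAt ℝ b y)
    (hbderiv : ∀ y ∈ interior Sset, ∀ i : Fin h,
      ‖fderiv ℝ b y (Pi.single i 1)‖ ≤ Abb + Bbb * ‖y‖)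
    (hMdiff : ∀ y ∈ interior Sset, ∀ m n : Fin d,
      DifferentiableAt ℝ (fun z => ((σ z * (σ z)ᵀ)⁻¹) m n) y)
    (hMderiv : ∀ y ∈ interior Sset, ∀ i : Fin h, ∀ m n : Fin d,
      |fderiv ℝ (fun z => ((σ z * (σ z)ᵀ)⁻¹) m n) y (Pi.single i 1)|
        ≤ Abσ + Bbσ * ‖y‖) :
    ∃ A₁ A₂ A₃ A₄ : ℝ, 0 ≤ A₁ ∧ 0 ≤ A₂ ∧ 0 ≤ A₃ ∧ 0 ≤ A₄ ∧
      ∀ y ∈ interior Sset,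
        DifferentiableAt ℝ
          (fun z => (fun i => b z i - r) ⬝ᵥ
            ((σ z * (σ z)ᵀ)⁻¹ *ᵥ (fun i => b z i - r))) y
        ∧ ∀ i : Fin h,
            |fderiv ℝ
              (fun z => (fun i => b z i - r) ⬝ᵥ
                ((σ z * (σ z)ᵀ)⁻¹ *ᵥ (fun i => b z i - r))) y (Pi.single i 1)|
              ≤ A₁ + A₂ * ‖y‖ + A₃ * ‖y‖ ^ 2 + A₄ * ‖y‖ ^ 3 :=
  stmt_11_general d h Sset K hK hSK r b σ Ab Bb bσ hAb hBb hbσ hb hσinv Abb Bbb Abσ Bbσ hAbb hBbb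
    hAbσ hBbσ hbdiff hbderiv hMdiff hMderiv
end
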